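/- arXiv:1805.03789 — 2 statements merged into one kernel-verified Lean document; each statement's English description precedes it below -/
import Mathlib

section
/- For a skew polynomial F = Σ_i F_i x^i over F_{q^m} with automorphism σ, define the linearized operator F^{D_a}(β) = Σ_i F_i σ^i(β) N_i(a), where N_i(a) = σ^{i−1}(a)···σ(a)a. Then for all nonzero β ∈ F_{q^m}, the skew evaluation satisfies F(σ(β)β^{−1} a) = F^{D_a}(β) β^{−1}. -/
open Finset

/-- The `i`-th truncated norm `N_i(a) = σ^{i−1}(a)⋯σ(a)·a`. -/
def skewNorm {K : Type*} [Field K] (σ : K ≃+* K) (i : ℕ) (a : K) : K :=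
  ∏ j ∈ Finset.range i, (σ ^ j) a

/-- Evaluation of a skew polynomial `F ∈ K[x;σ]` (encoded by its coefficients
`F : ℕ →₀ K`) at `a`: the remainder of right division of `F` by `x − a`, given by
the closed formula `F(a) = Σᵢ Fᵢ · N_i(a)`. -/
noncomputable def skewEval {K : Type*} [Field K] (σ : K ≃+* K) (F : ℕ →₀ K) (a : K) : K :=
  F.sum fun i c => c * skewNorm σ i a

/-- Multiplication in the skew polynomial ring `K[x;σ]`, where `x·a = σ(a)·x`. -/
noncomputable def skewMul {K : Type*} [Field K] (σ : K ≃+* K) (U V : ℕ →₀ K) : ℕ →₀ K :=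
  U.sum fun i a => V.sum fun j b => Finsupp.single (i + j) (a * (σ ^ i) b)

/-- The linearized operator `F^{D_a}` associated with a skew polynomial `F`:
`F^{D_a}(β) = Σᵢ Fᵢ · σⁱ(β) · N_i(a)`. -/
noncomputable def linOpEval {K : Type*} [Field K] (σ : K ≃+* K) (F : ℕ →₀ K) (a β : K) : K :=
  F.sum fun i c => c * (σ ^ i) β * skewNorm σ i a

/-!
`N_i` is multiplicative in `a`, and on `σ(β)β⁻¹` its product telescopes to `σⁱ(β)β⁻¹`;
so substituting `σ(β)β⁻¹a` into `Σᵢ Fᵢ N_i` multiplies the `i`-th term by `σⁱ(β)β⁻¹`.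
-/

section

variable {K : Type*} [Field K] (σ : K ≃+* K) (i : ℕ)

lemma skewNorm_mul (a b : K) : skewNorm σ i (a * b) = skewNorm σ i a * skewNorm σ i b := by
  simp only [skewNorm, map_mul, prod_mul_distrib]

lemma skewNorm_sigma_mul_inv {β : K} (hβ : β ≠ 0) :
    skewNorm σ i (σ β * β⁻¹) = (σ ^ i) β * β⁻¹ := by
  induction i with
  | zero => simp [skewNorm, hβ]
  | succ n ih =>
    have hσβ : (σ ^ n) β ≠ 0 := (map_ne_zero _).mpr hβ
    have hpow : (σ ^ n) (σ β) = (σ ^ (n + 1)) β := by rw [pow_succ]; rfl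
    rw [skewNorm, prod_range_succ, ← skewNorm, ih, map_mul, map_inv₀, hpow]
    field_simp

end

/-- For all nonzero `β`, the skew evaluation satisfies
`F(σ(β)β⁻¹·a) = F^{D_a}(β)·β⁻¹`. -/
theorem skewEval_conj_eq_linOpEval {K : Type*} [Field K] (σ : K ≃+* K) (F : ℕ →₀ K)
    (a β : K) (hβ : β ≠ 0) :
    skewEval σ F (σ β * β⁻¹ * a) = linOpEval σ F a β * β⁻¹ := by
  rw [skewEval, linOpEval, Finsupp.sum_mul]
  refine Finsupp.sum_congr fun i _ => ?_
  rw [skewNorm_mul, skewNorm_sigma_mul_inv σ i hβ]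
  ring
end

section
/- Welch-Berlekamp key equation correctness: let B = {b_1,...,b_n} be a P-basis of a P-closed set Ω ⊆ F_{q^m}, k ≤ n, t = ⌊(n−k)/2⌋. Suppose F, R ∈ F_{q^m}[x;σ] with deg F < k, deg R < n, and wt_Ω(R − F) ≤ t. If L, Q ∈ F_{q^m}[x;σ] satisfy deg L ≤ t, deg Q ≤ t + k − 1, and (L·R)(b_i) = Q(b_i) for all i = 1,...,n (in the sense that Q(b_i)=0 when R(b_i)=0, and L(b_i^{r_i}) r_i = Q(b_i) when r_i = R(b_i) ≠ 0), then Q = L·F in F_{q^m}[x;σ]. -/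
open Finset

/-- Degree of a skew polynomial encoded as `ℕ →₀ K` (with `deg 0 = 0` by convention). -/
def skewDeg {K : Type*} [Field K] (F : ℕ →₀ K) : ℕ := F.support.sup id

/-- `F` is the (monic) minimal skew polynomial of the set `Ω`: it is nonzero, monic,
vanishes on `Ω`, and has minimal degree among nonzero skew polynomials vanishing on `Ω`. -/
def IsMinSkewPoly {K : Type*} [Field K] (σ : K ≃+* K) (Ω : Set K) (F : ℕ →₀ K) : Prop :=
  F ≠ 0 ∧ F (skewDeg F) = 1 ∧ (∀ b ∈ Ω, skewEval σ F b = 0) ∧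
    ∀ G : ℕ →₀ K, G ≠ 0 → (∀ b ∈ Ω, skewEval σ G b = 0) → skewDeg F ≤ skewDeg G

/-- `a` is P-independent from the set `T`: some skew polynomial vanishing on `T` does not
vanish at `a` (equivalently, `a` is not in the P-closure of `T`). -/
def PIndepFrom {K : Type*} [Field K] (σ : K ≃+* K) (a : K) (T : Set K) : Prop :=
  ∃ F : ℕ →₀ K, (∀ b ∈ T, skewEval σ F b = 0) ∧ skewEval σ F a ≠ 0

/-- A set is P-independent if each of its elements is P-independent from the rest. -/
def PIndep {K : Type*} [Field K] (σ : K ≃+* K) (S : Set K) : Prop :=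
  ∀ a ∈ S, PIndepFrom σ a (S \ {a})

/-! By the product rule, the key equations say that `L·R − Q` vanishes on the P-basis `B`;
the minimal polynomial of `B` then right-divides it, so it vanishes on all of `Ω`.  On the
zeros of `R − F` in `Ω` the evaluations of `L·R` and `L·F` agree, so `L·F − Q` vanishes on
that set, whose rank is at least `n − t` by the weight bound.  But `deg (L·F − Q) < t + k ≤ n − t`,
so `L·F − Q = 0`. -/

section SkewPolynomial

variable {K : Type*} [Field K] (σ : K ≃+* K)

lemma skewNorm_zero (a : K) : skewNorm σ 0 a = 1 := Finset.prod_range_zero _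

lemma skewNorm_succ (i : ℕ) (a : K) :
    skewNorm σ (i + 1) a = skewNorm σ i a * (σ ^ i) a :=
  Finset.prod_range_succ _ _

lemma skewNorm_add (i j : ℕ) (a : K) :
    skewNorm σ (i + j) a = skewNorm σ i a * (σ ^ i) (skewNorm σ j a) := by
  simp only [skewNorm, Finset.prod_range_add, map_prod, pow_add, RingAut.mul_apply]

lemma skewNorm_conj {v : K} (hv : v ≠ 0) (i : ℕ) (a : K) :
    skewNorm σ i (σ v * v⁻¹ * a) = (σ ^ i) v * v⁻¹ * skewNorm σ i a := by
  induction i with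
  | zero => rw [skewNorm_zero, skewNorm_zero, pow_zero, RingAut.one_apply, mul_inv_cancel₀ hv,
      one_mul]
  | succ i ih =>
    have hσi : (σ ^ i) v ≠ 0 := (map_ne_zero _).2 hv
    rw [skewNorm_succ, skewNorm_succ, ih, map_mul, map_mul, map_inv₀, ← RingAut.mul_apply,
      ← pow_succ]
    field_simp

lemma skewEval_add (U V : ℕ →₀ K) (a : K) :
    skewEval σ (U + V) a = skewEval σ U a + skewEval σ V a :=
  Finsupp.sum_add_index (by simp) (fun _ _ _ _ => add_mul _ _ _)

lemma skewEval_sub (U V : ℕ →₀ K) (a : K) :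
    skewEval σ (U - V) a = skewEval σ U a - skewEval σ V a :=
  Finsupp.sum_sub_index (fun _ _ _ => sub_mul _ _ _)

lemma skewEval_skewMul (U V : ℕ →₀ K) (a : K) :
    skewEval σ (skewMul σ U V) a
      = U.sum fun i c => c * skewNorm σ i a * (σ ^ i) (skewEval σ V a) := by
  unfold skewMul skewEval
  rw [Finsupp.sum_sum_index (by simp) (fun _ _ _ => add_mul _ _ _)]
  refine Finsupp.sum_congr fun i _ => ?_
  rw [Finsupp.sum_sum_index (by simp) (fun _ _ _ => add_mul _ _ _), map_finsuppSum,
    Finsupp.mul_sum]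
  refine Finsupp.sum_congr fun j _ => ?_
  rw [Finsupp.sum_single_index (zero_mul _), skewNorm_add, map_mul]
  ring

lemma skewEval_skewMul_congr (U : ℕ →₀ K) {V W : ℕ →₀ K} {a : K}
    (h : skewEval σ V a = skewEval σ W a) :
    skewEval σ (skewMul σ U V) a = skewEval σ (skewMul σ U W) a := by
  rw [skewEval_skewMul, skewEval_skewMul, h]

lemma skewEval_skewMul_of_skewEval_eq_zero (U : ℕ →₀ K) {V : ℕ →₀ K} {a : K}
    (h : skewEval σ V a = 0) : skewEval σ (skewMul σ U V) a = 0 := by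
  simp [skewEval_skewMul, h, Finsupp.sum]

lemma skewEval_skewMul_of_skewEval_ne_zero (U : ℕ →₀ K) {V : ℕ →₀ K} {a : K}
    (h : skewEval σ V a ≠ 0) :
    skewEval σ (skewMul σ U V) a
      = skewEval σ U (σ (skewEval σ V a) * (skewEval σ V a)⁻¹ * a) * skewEval σ V a := by
  rw [skewEval_skewMul]
  set v := skewEval σ V a
  rw [skewEval, Finsupp.sum_mul]
  refine Finsupp.sum_congr fun i _ => ?_
  rw [skewNorm_conj σ h]
  field_simp

lemma skewMul_zero_left (V : ℕ →₀ K) : skewMul σ 0 V = 0 :=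
  Finsupp.sum_zero_index

lemma skewMul_add_left (U U' V : ℕ →₀ K) :
    skewMul σ (U + U') V = skewMul σ U V + skewMul σ U' V := by
  refine Finsupp.sum_add_index (by simp) fun i _ b₁ b₂ => ?_
  rw [← Finsupp.sum_add]
  exact Finsupp.sum_congr fun j _ => by rw [← Finsupp.single_add, add_mul]

lemma skewMul_single_apply (s : ℕ) (c : K) (M : ℕ →₀ K) (l : ℕ) :
    skewMul σ (Finsupp.single s c) M l = if s ≤ l then c * (σ ^ s) (M (l - s)) else 0 := by
  classical
  rw [skewMul, Finsupp.sum_single_index (by simp), Finsupp.sum_apply, Finsupp.sum]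
  simp only [Finsupp.single_apply]
  split_ifs with hs
  · have hidx : ∀ j ∈ M.support, (if s + j = l then c * (σ ^ s) (M j) else 0)
        = if l - s = j then c * (σ ^ s) (M j) else 0 := fun j _ => by
      congr 1
      exact propext (by omega)
    rw [Finset.sum_congr rfl hidx, Finset.sum_ite_eq]
    split_ifs with hmem
    · rfl
    · rw [Finsupp.notMem_support_iff.mp hmem, map_zero, mul_zero]
  · exact Finset.sum_eq_zero fun j _ => if_neg (by omega)

lemma skewMul_apply_eq_zero {U V : ℕ →₀ K} {p q : ℕ} (hU : ∀ i, p < i → U i = 0)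
    (hV : ∀ j, q ≤ j → V j = 0) {l : ℕ} (hl : p + q ≤ l) : skewMul σ U V l = 0 := by
  rw [skewMul, Finsupp.sum_apply]
  refine Finset.sum_eq_zero fun i _ => ?_
  dsimp only
  rw [Finsupp.sum_apply]
  refine Finset.sum_eq_zero fun j _ => ?_
  dsimp only
  rw [Finsupp.single_apply]
  split_ifs with hij
  · rcases lt_or_ge p i with hi | hi
    · rw [hU i hi, zero_mul]
    · rw [hV j (by omega), map_zero, mul_zero]
  · rfl

lemma apply_eq_zero_of_skewDeg_lt {P : ℕ →₀ K} {j : ℕ} (h : skewDeg P < j) : P j = 0 := by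
  by_contra h0
  exact absurd (Finset.le_sup (f := id) (Finsupp.mem_support_iff.2 h0)) (not_le.2 h)

lemma skewDeg_lt_of_apply_eq_zero {P : ℕ →₀ K} (hP : P ≠ 0) {m : ℕ}
    (h : ∀ i, m ≤ i → P i = 0) : skewDeg P < m := by
  obtain ⟨i, hi⟩ := Finsupp.ne_iff.1 hP
  have hm : 0 < m := Nat.pos_of_ne_zero fun hm => hi (by rw [h i (by omega)]; rfl)
  refine (Finset.sup_lt_iff hm).2 fun j hj => ?_
  by_contra! hmj
  exact Finsupp.mem_support_iff.1 hj (h j hmj)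

lemma exists_eq_skewMul_add {M : ℕ →₀ K} {d : ℕ} (hM : M d = 1)
    (hMd : ∀ j, d < j → M j = 0) (m : ℕ) (P : ℕ →₀ K) (hPm : ∀ i, m ≤ i → P i = 0) :
    ∃ C ρ : ℕ →₀ K, P = skewMul σ C M + ρ ∧ ∀ j, d ≤ j → ρ j = 0 := by
  induction m generalizing P with
  | zero =>
    exact ⟨0, 0, by rw [skewMul_zero_left, add_zero]; exact Finsupp.ext fun i => hPm i i.zero_le,
      fun _ _ => rfl⟩
  | succ m ih =>
    by_cases hmd : m < d
    · exact ⟨0, P, by rw [skewMul_zero_left, zero_add], fun j hj => hPm j (by omega)⟩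
    -- cancel the leading coefficient `P m` against `P m · x^(m-d) · M`
    set X := skewMul σ (Finsupp.single (m - d) (P m)) M with hX
    have hPX : ∀ i, m ≤ i → (P - X) i = 0 := by
      intro i hi
      rw [Finsupp.sub_apply, hX, skewMul_single_apply, if_pos (by omega)]
      rcases hi.eq_or_lt with rfl | hlt
      · rw [Nat.sub_sub_self (by omega), hM, map_one, mul_one, sub_self]
      · rw [hMd _ (by omega), map_zero, mul_zero, hPm i hlt, sub_zero]
    obtain ⟨C, ρ, hC, hρ⟩ := ih (P - X) hPX
    refine ⟨C + Finsupp.single (m - d) (P m), ρ, ?_, hρ⟩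
    rw [skewMul_add_left, ← hX, ← add_right_comm, ← hC, sub_add_cancel]

lemma IsMinSkewPoly.exists_eq_skewMul {S : Set K} {M : ℕ →₀ K} (hM : IsMinSkewPoly σ S M)
    {P : ℕ →₀ K} (hP : ∀ b ∈ S, skewEval σ P b = 0) : ∃ C, P = skewMul σ C M := by
  obtain ⟨-, hmonic, hMS, hmin⟩ := hM
  obtain ⟨C, ρ, hC, hρ⟩ := exists_eq_skewMul_add σ hmonic
    (fun _ => apply_eq_zero_of_skewDeg_lt) (skewDeg P + 1) P
    (fun _ hi => apply_eq_zero_of_skewDeg_lt (by omega))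
  refine ⟨C, ?_⟩
  suffices hρ0 : ρ = 0 by rwa [hρ0, add_zero] at hC
  by_contra hρ0
  have hρS : ∀ b ∈ S, skewEval σ ρ b = 0 := fun b hb => by
    simpa [hC, skewEval_add, skewEval_skewMul_of_skewEval_eq_zero σ C (hMS b hb)] using hP b hb
  exact (skewDeg_lt_of_apply_eq_zero hρ0 hρ).not_ge (hmin ρ hρ0 hρS)

lemma IsMinSkewPoly.skewEval_eq_zero {S : Set K} {M : ℕ →₀ K} (hM : IsMinSkewPoly σ S M)
    {P : ℕ →₀ K} (hP : ∀ b ∈ S, skewEval σ P b = 0) {a : K} (ha : skewEval σ M a = 0) :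
    skewEval σ P a = 0 := by
  obtain ⟨C, rfl⟩ := hM.exists_eq_skewMul σ hP
  exact skewEval_skewMul_of_skewEval_eq_zero σ C ha

end SkewPolynomial

theorem welch_berlekamp_key_equation_general {K : Type*} [Field K] (σ : K ≃+* K)
    (Ω : Set K)
    (n k : ℕ) (hk1 : 1 ≤ k) (hkn : k ≤ n)
    (B : Fin n → K)
    (FB : ℕ →₀ K) (hFB : IsMinSkewPoly σ (Set.range B) FB)
    (hBgen : {a | skewEval σ FB a = 0} = Ω)
    (F R : ℕ →₀ K) (hdegF : ∀ i, k ≤ i → F i = 0)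
    (hwt : ∃ FZ : ℕ →₀ K,
      IsMinSkewPoly σ {a | a ∈ Ω ∧ skewEval σ (R - F) a = 0} FZ ∧
        n - skewDeg FZ ≤ (n - k) / 2)
    (L Q : ℕ →₀ K)
    (hdegL : ∀ i, (n - k) / 2 < i → L i = 0)
    (hdegQ : ∀ i, (n - k) / 2 + k - 1 < i → Q i = 0)
    (hkey : ∀ i : Fin n,
      (skewEval σ R (B i) = 0 → skewEval σ Q (B i) = 0) ∧
      (skewEval σ R (B i) ≠ 0 →
        skewEval σ L (σ (skewEval σ R (B i)) * (skewEval σ R (B i))⁻¹ * B i) *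
            skewEval σ R (B i) = skewEval σ Q (B i))) :
    Q = skewMul σ L F := by
  obtain ⟨FZ, hFZ, hwtFZ⟩ := hwt
  have hB : ∀ b ∈ Set.range B, skewEval σ (skewMul σ L R - Q) b = 0 := by
    rintro _ ⟨i, rfl⟩
    rw [skewEval_sub, sub_eq_zero]
    by_cases hr : skewEval σ R (B i) = 0
    · rw [skewEval_skewMul_of_skewEval_eq_zero σ L hr, (hkey i).1 hr]
    · rw [skewEval_skewMul_of_skewEval_ne_zero σ L hr, (hkey i).2 hr]
  have hZ : ∀ a ∈ {a | a ∈ Ω ∧ skewEval σ (R - F) a = 0},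
      skewEval σ (skewMul σ L F - Q) a = 0 := by
    rintro a ⟨haΩ, haRF⟩
    rw [← hBgen] at haΩ
    rw [skewEval_sub, sub_eq_zero] at haRF ⊢
    rw [skewEval_skewMul_congr σ L haRF.symm]
    have hΩ := hFB.skewEval_eq_zero σ hB haΩ
    rwa [skewEval_sub, sub_eq_zero] at hΩ
  by_contra hne
  have hψ : skewMul σ L F - Q ≠ 0 := sub_ne_zero.2 (Ne.symm hne)
  have hdeg : skewDeg (skewMul σ L F - Q) < (n - k) / 2 + k :=
    skewDeg_lt_of_apply_eq_zero hψ fun i hi => by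
      rw [Finsupp.sub_apply, skewMul_apply_eq_zero σ hdegL hdegF hi, hdegQ i (by omega), sub_zero]
  have hrank : skewDeg FZ ≤ skewDeg (skewMul σ L F - Q) := hFZ.2.2.2 _ hψ hZ
  omega

/-- Correctness of the Welch–Berlekamp key equations: let `B = {b₁,…,b_n}` be a P-basis
of a P-closed set `Ω` of rank `n`, `1 ≤ k ≤ n`, `t = ⌊(n−k)/2⌋`.  Suppose
`deg F < k`, `deg R < n` and the skew weight `wt_Ω(R − F) = n − Rk(Z(R−F) ∩ Ω)` is at
most `t`.  If `deg L ≤ t`, `deg Q ≤ t + k − 1` and `(L·R)(bᵢ) = Q(bᵢ)` for all `i`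
(meaning `Q(bᵢ) = 0` when `rᵢ = R(bᵢ) = 0`, and `L(bᵢ^{rᵢ})·rᵢ = Q(bᵢ)` when `rᵢ ≠ 0`),
then `Q = L·F` in `K[x;σ]`. -/
theorem welch_berlekamp_key_equation {K : Type*} [Field K] [Fintype K] (σ : K ≃+* K)
    (Ω : Set K) (FΩ : ℕ →₀ K) (hFΩ : IsMinSkewPoly σ Ω FΩ)
    (hclosed : Ω = {a | skewEval σ FΩ a = 0})
    (n k : ℕ) (hn : skewDeg FΩ = n) (hk1 : 1 ≤ k) (hkn : k ≤ n)
    (B : Fin n → K) (hBinj : Function.Injective B) (hBmem : ∀ i, B i ∈ Ω)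
    (hBindep : PIndep σ (Set.range B))
    (FB : ℕ →₀ K) (hFB : IsMinSkewPoly σ (Set.range B) FB)
    (hBgen : {a | skewEval σ FB a = 0} = Ω)
    (F R : ℕ →₀ K) (hdegF : ∀ i, k ≤ i → F i = 0) (hdegR : ∀ i, n ≤ i → R i = 0)
    (hwt : ∃ FZ : ℕ →₀ K,
      IsMinSkewPoly σ {a | a ∈ Ω ∧ skewEval σ (R - F) a = 0} FZ ∧
        n - skewDeg FZ ≤ (n - k) / 2)
    (L Q : ℕ →₀ K)
    (hdegL : ∀ i, (n - k) / 2 < i → L i = 0)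
    (hdegQ : ∀ i, (n - k) / 2 + k - 1 < i → Q i = 0)
    (hkey : ∀ i : Fin n,
      (skewEval σ R (B i) = 0 → skewEval σ Q (B i) = 0) ∧
      (skewEval σ R (B i) ≠ 0 →
        skewEval σ L (σ (skewEval σ R (B i)) * (skewEval σ R (B i))⁻¹ * B i) *
            skewEval σ R (B i) = skewEval σ Q (B i))) :
    Q = skewMul σ L F :=
  welch_berlekamp_key_equation_general σ Ω n k hk1 hkn B FB hFB hBgen F R hdegF hwt L Q hdegL hdegQ
    hkey
end
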